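/- For every norm ⦀·⦀ on ℝ^d and every function φ : {0,…,d} → ℝ̄, the Capra subdifferential of φ∘ℓ0 at 0 is ∂_¢(φ∘ℓ0)(0) = ⋂_{l=1}^{d} ( φ(l) ∔̇ (−φ(0)) ) · B_{l,★}, where ∔̇ is the Moreau upper addition and B_{l,★} = {y : ⦀y⦀_{l,★} ≤ 1} is the unit ball of the dual coordinate-l norm, with the conventions λ·B_{l,★} = ∅ for λ ∈ [−∞,0) and (+∞)·B_{l,★} = ℝ^d. -/

import Mathlib

open scoped BigOperators

noncomputable section

/-- The Euclidean pairing `⟨x,y⟩ = ∑ i, x i * y i` on `Fin d → ℝ`. -/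
def dotp {d : ℕ} (x y : Fin d → ℝ) : ℝ := ∑ i, x i * y i

/-- The coordinate subspace `R_K` of vectors vanishing outside `K`. -/
def RK {d : ℕ} (K : Finset (Fin d)) : Set (Fin d → ℝ) := {x | ∀ j ∉ K, x j = 0}

/-- Orthogonal projection onto `R_K`. -/
def projK {d : ℕ} (K : Finset (Fin d)) (x : Fin d → ℝ) : Fin d → ℝ :=
  fun i => if i ∈ K then x i else 0

/-- The ℓ0 pseudonorm: number of nonzero components. -/
def ell0 {d : ℕ} (x : Fin d → ℝ) : ℕ := (Function.support x).ncard

/-- `N` is a norm on `ℝ^d`. -/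
structure IsNorm {d : ℕ} (N : (Fin d → ℝ) → ℝ) : Prop where
  eq_zero_iff : ∀ x, N x = 0 ↔ x = 0
  smul : ∀ (c : ℝ) (x : Fin d → ℝ), N (c • x) = |c| * N x
  triangle : ∀ x y, N (x + y) ≤ N x + N y

/-- `⦀y⦀_{K,★}`: the dual norm (w.r.t. the Euclidean pairing), on the subspace `R_K`,
of the restriction of `N` to `R_K`. -/
def restStar {d : ℕ} (N : (Fin d → ℝ) → ℝ) (K : Finset (Fin d)) (y : Fin d → ℝ) : ℝ :=
  sSup {r | ∃ x ∈ RK K, N x ≤ 1 ∧ r = dotp x y}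

/-- The dual coordinate-k norm `⦀y⦀_{k,★} = sup_{|K| ≤ k} ⦀y_K⦀_{K,★}`. -/
def dualCoord {d : ℕ} (N : (Fin d → ℝ) → ℝ) (k : ℕ) (y : Fin d → ℝ) : ℝ :=
  sSup {r | ∃ K : Finset (Fin d), K.card ≤ k ∧ r = restStar N K (projK K y)}

/-- The coordinate-k norm: the dual norm of the dual coordinate-k norm. -/
def coordNorm {d : ℕ} (N : (Fin d → ℝ) → ℝ) (k : ℕ) (x : Fin d → ℝ) : ℝ :=
  sSup {r | ∃ y : Fin d → ℝ, dualCoord N k y ≤ 1 ∧ r = dotp x y}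

/-- The Capra coupling `¢(x,y) = ⟨x,y⟩/⦀x⦀` (with `¢(0,y) = 0`). -/
def capra {d : ℕ} (N : (Fin d → ℝ) → ℝ) (x y : Fin d → ℝ) : ℝ :=
  if x = 0 then 0 else dotp x y / N x

/-- Capra conjugate `f^¢(y) = sup_x ( ¢(x,y) ∔ (−f(x)) )`.
(EReal addition is the Moreau lower addition: `⊤ + ⊥ = ⊥`.) -/
def capraConj {d : ℕ} (N : (Fin d → ℝ) → ℝ) (f : (Fin d → ℝ) → EReal)
    (y : Fin d → ℝ) : EReal :=
  ⨆ x : Fin d → ℝ, ((capra N x y : ℝ) : EReal) + (- f x)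

/-- Capra biconjugate `f^{¢¢'}(x) = sup_y ( ¢(x,y) ∔ (−f^¢(y)) )`. -/
def capraBiconj {d : ℕ} (N : (Fin d → ℝ) → ℝ) (f : (Fin d → ℝ) → EReal)
    (x : Fin d → ℝ) : EReal :=
  ⨆ y : Fin d → ℝ, ((capra N x y : ℝ) : EReal) + (- capraConj N f y)

/-- Fenchel conjugate `g^★(y) = sup_x ( ⟨x,y⟩ ∔ (−g(x)) )`. -/
def fenchelConj {d : ℕ} (g : (Fin d → ℝ) → EReal) (y : Fin d → ℝ) : EReal :=
  ⨆ x : Fin d → ℝ, ((dotp x y : ℝ) : EReal) + (- g x)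

/-- Moreau upper addition on `ℝ̄`: extends `+` with `(+∞) ∔̇ (−∞) = +∞`. -/
def uadd (a b : EReal) : EReal := -((-a) + (-b))

/-- `lam • B_{l,★}`, the scaling of the unit ball of the dual coordinate-l norm by
`lam ∈ ℝ̄`, with the conventions `lam • B = ∅` for `lam < 0` and `(+∞) • B = ℝ^d`. -/
def scaledDualBall {d : ℕ} (N : (Fin d → ℝ) → ℝ) (l : ℕ) (lam : EReal) :
    Set (Fin d → ℝ) :=
  if lam = ⊤ then Set.univ
  else if lam < 0 then ∅
  else {y | ((dualCoord N l y : ℝ) : EReal) ≤ lam}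

/-!
The coupling vanishes at `0`, so `y` is a Capra subgradient of `φ ∘ ℓ0` at `0` iff
`⟨x, y⟩ / N x ≤ φ(ℓ0 x) ∔̇ (-φ 0)` for every `x ≠ 0`. Group the `x` by `l = ℓ0 x`. The level
set `{ℓ0 = l}` is dense in `{ℓ0 ≤ l}`, and the supremum of `⟨x, y⟩ / N x` over the latter is
`⦀y⦀_{l,★}`, because `x / N x` ranges over the `N`-unit vectors of the coordinate subspaces of
dimension at most `l`. A negative bound can never hold, since `x` and `-x` lie in the same
level set and have opposite ratios.
-/
/-- `ℝ^d` with `N` as its norm, so that Mathlib's finite-dimensional normed-space theory applies. -/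
def NormedBy {d : ℕ} (_N : (Fin d → ℝ) → ℝ) : Type := Fin d → ℝ

section NormedBy

variable {d : ℕ} {N : (Fin d → ℝ) → ℝ}

instance : AddCommGroup (NormedBy N) := inferInstanceAs (AddCommGroup (Fin d → ℝ))

instance : Module ℝ (NormedBy N) := inferInstanceAs (Module ℝ (Fin d → ℝ))

instance : FiniteDimensional ℝ (NormedBy N) := inferInstanceAs (FiniteDimensional ℝ (Fin d → ℝ))

instance : Norm (NormedBy N) := ⟨N⟩

end NormedBy

namespace IsNorm

variable {d : ℕ} {N : (Fin d → ℝ) → ℝ}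

lemma map_zero (hN : IsNorm N) : N 0 = 0 := (hN.eq_zero_iff 0).2 rfl

lemma map_neg (hN : IsNorm N) (x : Fin d → ℝ) : N (-x) = N x := by
  simpa using hN.smul (-1) x

lemma nonneg (hN : IsNorm N) (x : Fin d → ℝ) : 0 ≤ N x := by
  have := hN.triangle x (-x)
  rw [add_neg_cancel, hN.map_zero, hN.map_neg] at this
  linarith

lemma pos (hN : IsNorm N) {x : Fin d → ℝ} (hx : x ≠ 0) : 0 < N x :=
  (hN.nonneg x).lt_of_ne fun h => hx ((hN.eq_zero_iff x).1 h.symm)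

lemma normedSpaceCore (hN : IsNorm N) : NormedSpace.Core ℝ (NormedBy N) where
  norm_nonneg := hN.nonneg
  norm_smul c x := hN.smul c x
  norm_triangle := hN.triangle
  norm_eq_zero_iff := hN.eq_zero_iff

/-- The finite dimension of `ℝ^d` enters here. -/
lemma exists_dotp_le (hN : IsNorm N) (z : Fin d → ℝ) :
    ∃ C, ∀ x, N x ≤ 1 → dotp x z ≤ C := by
  let := NormedAddCommGroup.ofCore hN.normedSpaceCore
  let := NormedSpace.ofCore hN.normedSpaceCore
  let f : NormedBy N →L[ℝ] ℝ := LinearMap.toContinuousLinearMap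
    { toFun := fun x => dotp x z
      map_add' := fun x x' => add_dotProduct (α := ℝ) x x' z
      map_smul' := fun c x => smul_dotProduct (α := ℝ) c x z }
  refine ⟨‖f‖, fun x hx => ?_⟩
  calc dotp x z ≤ ‖f x‖ := le_abs_self (f x)
    _ ≤ ‖f‖ * N x := f.le_opNorm x
    _ ≤ ‖f‖ := mul_le_of_le_one_right (norm_nonneg f) hx

end IsNorm

section Dotp

variable {d : ℕ}

lemma dotp_zero_left (y : Fin d → ℝ) : dotp 0 y = 0 := zero_dotProduct y

lemma dotp_add_left (x x' y : Fin d → ℝ) : dotp (x + x') y = dotp x y + dotp x' y :=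
  add_dotProduct x x' y

lemma dotp_smul_left (c : ℝ) (x y : Fin d → ℝ) : dotp (c • x) y = c * dotp x y :=
  smul_dotProduct c x y

lemma dotp_neg_left (x y : Fin d → ℝ) : dotp (-x) y = -dotp x y := neg_dotProduct x y

lemma dotp_projK {K : Finset (Fin d)} {x : Fin d → ℝ} (hx : x ∈ RK K) (y : Fin d → ℝ) :
    dotp x (projK K y) = dotp x y := by
  refine Finset.sum_congr rfl fun i _ => ?_
  by_cases hi : i ∈ K <;> simp [projK, hi, hx i]

end Dotp

section Ell0

variable {d : ℕ}

lemma ell0_zero : ell0 (0 : Fin d → ℝ) = 0 := by simp [ell0]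

lemma ell0_neg (x : Fin d → ℝ) : ell0 (-x) = ell0 x := by simp [ell0]

lemma ell0_le (x : Fin d → ℝ) : ell0 x ≤ d := by
  simpa [ell0] using Set.ncard_le_card (Function.support x)

lemma one_le_ell0_iff {x : Fin d → ℝ} : 1 ≤ ell0 x ↔ x ≠ 0 := by
  rw [Nat.one_le_iff_ne_zero, ← Nat.pos_iff_ne_zero, ell0, Set.ncard_pos,
    Function.support_nonempty_iff]

lemma ell0_le_card_of_mem_RK {K : Finset (Fin d)} {x : Fin d → ℝ} (hx : x ∈ RK K) :
    ell0 x ≤ K.card := by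
  rw [ell0, ← Set.ncard_coe_finset]
  exact Set.ncard_le_ncard fun i hi => by_contra fun hiK => hi (hx i hiK)

lemma exists_finset_support_eq (x : Fin d → ℝ) :
    ∃ s : Finset (Fin d), ↑s = Function.support x ∧ s.card = ell0 x :=
  ⟨(Set.toFinite _).toFinset, Set.Finite.coe_toFinset _, (Set.ncard_eq_toFinset_card _).symm⟩

lemma exists_ell0_eq {l : ℕ} (hl : l ≤ d) : ∃ x : Fin d → ℝ, ell0 x = l := by
  obtain ⟨t, -, ht⟩ := Finset.exists_subset_card_eq (s := (Finset.univ : Finset (Fin d)))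
    (by simpa using hl)
  exact ⟨Set.indicator (↑t) 1, by simp [ell0, ht]⟩

lemma ell0_add_smul_indicator {x : Fin d → ℝ} {t : Finset (Fin d)}
    (hxt : Function.support x ⊆ t) {ε : ℝ} (hε : ε ≠ 0) :
    ell0 (x + ε • Set.indicator (↑t \ Function.support x) 1) = t.card := by
  rw [ell0, ← Set.ncard_coe_finset]
  congr 1
  ext i
  by_cases hi : x i = 0 <;> by_cases hit : i ∈ t <;> simp [hi, hit, hε]
  exact hit (hxt hi)

end Ell0

section DualCoord

variable {d : ℕ} {N : (Fin d → ℝ) → ℝ}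

lemma restStar_le (hN : IsNorm N) {K : Finset (Fin d)} {z : Fin d → ℝ} {b : ℝ}
    (hb : ∀ x ∈ RK K, N x ≤ 1 → dotp x z ≤ b) : restStar N K z ≤ b := by
  refine csSup_le ⟨0, 0, fun _ _ => rfl, by simp [hN.map_zero], (dotp_zero_left z).symm⟩ ?_
  rintro r ⟨x, hxK, hx1, rfl⟩
  exact hb x hxK hx1

lemma dotp_le_restStar (hN : IsNorm N) {K : Finset (Fin d)} {x : Fin d → ℝ} (hxK : x ∈ RK K)
    (hx1 : N x ≤ 1) (z : Fin d → ℝ) : dotp x z ≤ restStar N K z := by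
  obtain ⟨C, hC⟩ := hN.exists_dotp_le z
  refine le_csSup ⟨C, ?_⟩ ⟨x, hxK, hx1, rfl⟩
  rintro r ⟨x', -, hx'1, rfl⟩
  exact hC x' hx'1

lemma restStar_le_dualCoord {k : ℕ} {K : Finset (Fin d)} (hK : K.card ≤ k) (y : Fin d → ℝ) :
    restStar N K (projK K y) ≤ dualCoord N k y := by
  have hfin : {r | ∃ K : Finset (Fin d), K.card ≤ k ∧ r = restStar N K (projK K y)}.Finite :=
    (Set.finite_range fun K : Finset (Fin d) => restStar N K (projK K y)).subset
      fun r ⟨K, _, hr⟩ => ⟨K, hr.symm⟩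
  exact le_csSup hfin.bddAbove ⟨K, hK, rfl⟩

lemma dualCoord_le {k : ℕ} {y : Fin d → ℝ} {b : ℝ}
    (hb : ∀ K : Finset (Fin d), K.card ≤ k → restStar N K (projK K y) ≤ b) :
    dualCoord N k y ≤ b := by
  refine csSup_le ⟨_, ∅, by simp, rfl⟩ ?_
  rintro r ⟨K, hK, rfl⟩
  exact hb K hK

lemma dualCoord_le_iff (hN : IsNorm N) {l : ℕ} {y : Fin d → ℝ} {μ : ℝ} (hμ : 0 ≤ μ) :
    dualCoord N l y ≤ μ ↔ ∀ x, ell0 x ≤ l → dotp x y ≤ μ * N x := by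
  constructor
  · intro h x hxl
    rcases eq_or_ne x 0 with rfl | hx
    · simp [dotp_zero_left, hN.map_zero]
    obtain ⟨K, hK, hKcard⟩ := exists_finset_support_eq x
    have hxK : x ∈ RK K := fun j hj => Function.notMem_support.1 (hK ▸ hj)
    have hNx := hN.pos hx
    have hunit : N ((N x)⁻¹ • x) ≤ 1 := by
      rw [hN.smul, abs_inv, abs_of_pos hNx, inv_mul_cancel₀ hNx.ne']
    have hsmulK : (N x)⁻¹ • x ∈ RK K := fun j hj => by simp [hxK j hj]
    have hbound := (dotp_le_restStar hN hsmulK hunit _).trans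
      ((restStar_le_dualCoord (hKcard.trans_le hxl) y).trans h)
    rwa [dotp_projK hsmulK, dotp_smul_left, inv_mul_le_iff₀ hNx, mul_comm] at hbound
  · intro h
    refine dualCoord_le fun K hK => restStar_le hN fun x hxK hx1 => ?_
    rw [dotp_projK hxK]
    calc dotp x y ≤ μ * N x := h x ((ell0_le_card_of_mem_RK hxK).trans hK)
      _ ≤ μ := mul_le_of_le_one_right hμ hx1

/-- Raise `ℓ0 x` to `l` by filling zero entries of `x` with `ε > 0`, then let `ε → 0`. -/
lemma forall_ell0_le_of_forall_ell0_eq (hN : IsNorm N) {l : ℕ} (hld : l ≤ d) {y : Fin d → ℝ}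
    {μ : ℝ} (hμ : 0 ≤ μ) (h : ∀ x, ell0 x = l → dotp x y ≤ μ * N x) :
    ∀ x, ell0 x ≤ l → dotp x y ≤ μ * N x := by
  intro x hxl
  obtain ⟨s, hs, hscard⟩ := exists_finset_support_eq x
  obtain ⟨t, hst, htcard⟩ := Finset.exists_superset_card_eq (hscard.trans_le hxl)
    (by simpa using hld)
  set v : Fin d → ℝ := Set.indicator (↑t \ Function.support x) 1
  have hsupp : Function.support x ⊆ t := hs ▸ Finset.coe_subset.2 hst
  have hperturb : ∀ ε > (0 : ℝ), dotp x y - μ * N x ≤ ε * (μ * N v - dotp v y) := by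
    intro ε hε
    have h1 := h (x + ε • v) ((ell0_add_smul_indicator hsupp hε.ne').trans htcard)
    have h2 : N (x + ε • v) ≤ N x + ε * N v := by
      simpa [hN.smul, abs_of_pos hε] using hN.triangle x (ε • v)
    rw [dotp_add_left, dotp_smul_left] at h1
    nlinarith [mul_le_mul_of_nonneg_left h2 hμ]
  have hlim : Filter.Tendsto (fun ε : ℝ => ε * (μ * N v - dotp v y)) (nhdsWithin 0 (Set.Ioi 0))
      (nhds 0) :=
    ((continuous_mul_const _).tendsto' (0 : ℝ) 0 (zero_mul _)).mono_left
      nhdsWithin_le_nhds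
  have hgap := ge_of_tendsto hlim (eventually_nhdsWithin_of_forall hperturb)
  linarith

end DualCoord

section Capra

variable {d : ℕ} {N : (Fin d → ℝ) → ℝ}

lemma capra_zero_left (y : Fin d → ℝ) : capra N 0 y = 0 := if_pos rfl

lemma capra_neg_left (hN : IsNorm N) (x y : Fin d → ℝ) : capra N (-x) y = -capra N x y := by
  by_cases hx : x = 0
  · simp [hx, capra_zero_left]
  · simp [capra, hx, dotp_neg_left, hN.map_neg, neg_div]

lemma capra_le_iff (hN : IsNorm N) {x : Fin d → ℝ} (hx : x ≠ 0) (y : Fin d → ℝ) (μ : ℝ) :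
    capra N x y ≤ μ ↔ dotp x y ≤ μ * N x := by
  rw [capra, if_neg hx, div_le_iff₀ (hN.pos hx)]

lemma exists_ell0_eq_capra_nonneg (hN : IsNorm N) {l : ℕ} (hld : l ≤ d) (y : Fin d → ℝ) :
    ∃ x, ell0 x = l ∧ 0 ≤ capra N x y := by
  obtain ⟨x, hx⟩ := exists_ell0_eq hld
  rcases le_total 0 (capra N x y) with h | h
  · exact ⟨x, hx, h⟩
  · exact ⟨-x, (ell0_neg x).trans hx, by rw [capra_neg_left hN]; linarith⟩

lemma mem_scaledDualBall_iff (hN : IsNorm N) {l : ℕ} (hl : 1 ≤ l) (hld : l ≤ d)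
    (y : Fin d → ℝ) (lam : EReal) :
    y ∈ scaledDualBall N l lam ↔ ∀ x, ell0 x = l → (capra N x y : EReal) ≤ lam := by
  have hneg : lam < 0 → ¬∀ x, ell0 x = l → (capra N x y : EReal) ≤ lam := fun hlam h => by
    obtain ⟨x, hx, hcapra⟩ := exists_ell0_eq_capra_nonneg hN hld y
    exact (EReal.coe_nonneg.2 hcapra).not_gt ((h x hx).trans_lt hlam)
  induction lam using EReal.rec with
  | top => simp [scaledDualBall]
  | bot => simpa [scaledDualBall] using hneg EReal.bot_lt_zero
  | coe μ =>
    rcases lt_or_ge μ 0 with hμ | hμ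
    · simpa [scaledDualBall, hμ] using hneg (EReal.coe_lt_coe_iff.2 hμ)
    · have hne : ∀ x : Fin d → ℝ, ell0 x = l → x ≠ 0 := fun x hx => one_le_ell0_iff.1 (hx ▸ hl)
      have hμ' : ¬(μ : EReal) < 0 := by exact_mod_cast hμ.not_gt
      simp only [scaledDualBall, EReal.coe_ne_top, hμ', if_false, Set.mem_ofPred_eq,
        EReal.coe_le_coe_iff, dualCoord_le_iff hN hμ]
      refine ⟨fun h x hxl => (capra_le_iff hN (hne x hxl) y μ).2 (h x hxl.le), fun h => ?_⟩
      exact forall_ell0_le_of_forall_ell0_eq hN hld hμ fun x hxl =>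
        (capra_le_iff hN (hne x hxl) y μ).1 (h x hxl)

end Capra

lemma coe_add_neg_le_neg_iff_le_uadd (c : ℝ) (a b : EReal) :
    (c : EReal) + -a ≤ -b ↔ (c : EReal) ≤ uadd a (-b) := by
  rw [uadd, neg_neg]
  induction a using EReal.rec <;> induction b using EReal.rec
  case coe.coe a b =>
    norm_cast
    constructor <;> intro <;> linarith
  all_goals simp [EReal.add_top_of_ne_bot, EReal.top_add_of_ne_bot]

lemma iSup_eq_apply_iff {ι α : Type*} [CompleteLattice α] (f : ι → α) (i : ι) :
    ⨆ j, f j = f i ↔ ∀ j, f j ≤ f i :=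
  (le_iSup f i).ge_iff_eq'.symm.trans iSup_le_iff

theorem statement17 {d : ℕ} (N : (Fin d → ℝ) → ℝ) (hN : IsNorm N) (φ : ℕ → EReal) :
    {y : Fin d → ℝ |
        capraConj N (fun z => φ (ell0 z)) y
          = ((capra N 0 y : ℝ) : EReal) + (- φ (ell0 (0 : Fin d → ℝ)))}
      = ⋂ l ∈ Finset.Icc 1 d, scaledDualBall N l (uadd (φ l) (- φ 0)) := by
  ext y
  have hconj : capraConj N (fun z => φ (ell0 z)) y
        = ((capra N 0 y : ℝ) : EReal) + (- φ (ell0 (0 : Fin d → ℝ))) ↔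
      ∀ x, x ≠ 0 → (capra N x y : EReal) ≤ uadd (φ (ell0 x)) (-φ 0) := by
    rw [capraConj, iSup_eq_apply_iff (fun x => ((capra N x y : ℝ) : EReal) + -φ (ell0 x)) 0]
    refine forall_congr' fun x => ?_
    rcases eq_or_ne x 0 with rfl | hx
    · simp
    · simp only [capra_zero_left, ell0_zero, EReal.coe_zero, zero_add,
        coe_add_neg_le_neg_iff_le_uadd, hx, ne_eq, not_false_eq_true, forall_true_left]
  simp only [Set.mem_ofPred_eq, hconj, Set.mem_iInter, Finset.mem_Icc]
  refine ⟨fun h l ⟨hl, hld⟩ => (mem_scaledDualBall_iff hN hl hld y _).2 fun x hxl => ?_,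
    fun h x hx => ?_⟩
  · exact hxl ▸ h x (one_le_ell0_iff.1 (hxl ▸ hl))
  · exact (mem_scaledDualBall_iff hN (one_le_ell0_iff.2 hx) (ell0_le x) y _).1
      (h _ ⟨one_le_ell0_iff.2 hx, ell0_le x⟩) x rfl
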